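/- For any X⁰ ∈ L⁻¹(y), the weighted least squares minimizers converge to the least Frobenius norm solution as the regularization parameter tends to infinity: lim_{γ→∞} X^K_W, where W^{(J)} := ((X⁰)^{[J]} ((X⁰)^{[J]})ᵀ + γ I)⁻¹ for J ∈ K, equals the unique minimizer of ‖X‖_F over L⁻¹(y). In particular, this limit is independent of the choice of X⁰ ∈ L⁻¹(y). -/

import Mathlib

open scoped BigOperators
open Matrix

noncomputable section

abbrev TIdx (d : ℕ) (n : Fin d → ℕ) : Type := ∀ μ : Fin d, Fin (n μ)
abbrev Tensor (d : ℕ) (n : Fin d → ℕ) : Type := EuclideanSpace ℝ (TIdx d n)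

def nS {d : ℕ} (n : Fin d → ℕ) (S : Finset (Fin d)) : ℕ := ∏ μ ∈ S, n μ

def mat {d : ℕ} (n : Fin d → ℕ) (X : Tensor d n) (J : Finset (Fin d)) :
    Matrix (∀ μ : {μ : Fin d // μ ∈ J}, Fin (n μ.1))
      (∀ μ : {μ : Fin d // μ ∉ J}, Fin (n μ.1)) ℝ :=
  Matrix.of fun a b => X fun μ => if h : μ ∈ J then a ⟨μ, h⟩ else b ⟨μ, h⟩

def svalsSq {m k : Type*} [Fintype m] [Fintype k] [DecidableEq m]
    (A : Matrix m k ℝ) : ℕ → ℝ := fun i =>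
  ((((Finset.univ.val.map
        (Matrix.isHermitian_mul_conjTranspose_self A).eigenvalues).sort (· ≤ ·)).reverse).getD i 0)

def svals {m k : Type*} [Fintype m] [Fintype k] [DecidableEq m]
    (A : Matrix m k ℝ) : ℕ → ℝ := fun i => Real.sqrt (svalsSq A i)

def minorDet {m k : Type*} [DecidableEq m] [DecidableEq k]
    (A : Matrix m k ℝ) (s : ℕ) (I : Finset m) (J : Finset k) : ℝ :=
  if hI : I.card = s then
    if hJ : J.card = s then
      Matrix.det (Matrix.of fun a b : Fin s =>
        A ((I.equivFinOfCardEq hI).symm a).1 ((J.equivFinOfCardEq hJ).symm b).1)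
    else 0
  else 0

def detSq {m k : Type*} [Fintype m] [Fintype k] [DecidableEq m] [DecidableEq k]
    (A : Matrix m k ℝ) (s : ℕ) : ℝ :=
  ∑ I ∈ Finset.powersetCard s (Finset.univ : Finset m),
    ∑ J ∈ Finset.powersetCard s (Finset.univ : Finset k), (minorDet A s I J) ^ 2

def fK {d : ℕ} (n : Fin d → ℕ) (𝒥 : Finset (Finset (Fin d))) (γ : ℝ) (X : Tensor d n) : ℝ :=
  Real.log (∏ J ∈ 𝒥, (mat n X J * (mat n X J)ᴴ + γ • 1).det)

def wmat {d : ℕ} (n : Fin d → ℕ) (γ : ℝ) (Xw : Tensor d n) (J : Finset (Fin d)) :=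
  (mat n Xw J * (mat n Xw J)ᴴ + γ • (1 : Matrix _ _ ℝ))⁻¹

def Q {d : ℕ} (n : Fin d → ℕ) (𝒥 : Finset (Finset (Fin d))) (γ : ℝ) (Xw X' : Tensor d n) : ℝ :=
  ∑ J ∈ 𝒥, ((mat n X' J)ᴴ * wmat n γ Xw J * mat n X' J).trace

def KS {d : ℕ} (K S : Finset (Finset (Fin d))) : Finset (Finset (Fin d)) :=
  (K \ S) ∪ S.image (·ᶜ)

def unmat {d : ℕ} (n : Fin d → ℕ) (J : Finset (Fin d))
    (A : Matrix (∀ μ : {μ : Fin d // μ ∈ J}, Fin (n μ.1))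
      (∀ μ : {μ : Fin d // μ ∉ J}, Fin (n μ.1)) ℝ) : Tensor d n :=
  WithLp.toLp 2 fun idx => A (fun μ => idx μ.1) (fun μ => idx μ.1)

def Wop {d : ℕ} (n : Fin d → ℕ) (K : Finset (Finset (Fin d))) (γ : ℝ)
    (Xw X' : Tensor d n) : Tensor d n :=
  ∑ J ∈ K, unmat n J (wmat n γ Xw J * mat n X' J)


set_option linter.unusedSectionVars false

namespace Aux

variable {m k k' : Type*} [Fintype m] [Fintype k] [Fintype k']
  [DecidableEq m] [DecidableEq k] [DecidableEq k']

lemma trace_ct_mul_self (D : Matrix m k ℝ) :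
    (Dᴴ * D).trace = ∑ j, ∑ i, D i j ^ 2 := by
  simp [Matrix.trace, Matrix.mul_apply, Matrix.conjTranspose_apply, Matrix.diag, sq]

lemma trace_ct_mul_self_nonneg (D : Matrix m k ℝ) : 0 ≤ (Dᴴ * D).trace := by
  rw [trace_ct_mul_self]
  positivity

lemma conj_fact (A : Matrix m k ℝ) (U : Matrix m k' ℝ) :
    Uᴴ * (A * Aᴴ) * U = (Aᴴ * U)ᴴ * (Aᴴ * U) := by
  simp [Matrix.conjTranspose_mul, Matrix.mul_assoc]

lemma trace_conj_N_nonneg (A : Matrix m k ℝ) (U : Matrix m k' ℝ) :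
    0 ≤ (Uᴴ * (A * Aᴴ) * U).trace := by
  rw [conj_fact]; exact trace_ct_mul_self_nonneg _

lemma trace_sym (M : Matrix m m ℝ) (hM : Mᴴ = M) (U V : Matrix m k ℝ) :
    (Vᴴ * M * U).trace = (Uᴴ * M * V).trace := by
  have h : (Uᴴ * M * V)ᴴ = Vᴴ * M * U := by
    calc (Uᴴ * M * V)ᴴ = Vᴴ * (Mᴴ * Uᴴᴴ) := by
          rw [Matrix.conjTranspose_mul, Matrix.conjTranspose_mul]
      _ = Vᴴ * M * U := by
          rw [Matrix.conjTranspose_conjTranspose, hM, ← Matrix.mul_assoc]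
  calc (Vᴴ * M * U).trace = ((Uᴴ * M * V)ᴴ).trace := by rw [h]
    _ = (Uᴴ * M * V).trace := by rw [Matrix.trace_conjTranspose]; simp

lemma trace_cs (M : Matrix m m ℝ) (hM : Mᴴ = M)
    (hpos : ∀ U : Matrix m k ℝ, 0 ≤ (Uᴴ * M * U).trace) (U V : Matrix m k ℝ) :
    (Uᴴ * M * V).trace ^ 2 ≤ (Uᴴ * M * U).trace * (Vᴴ * M * V).trace := by
  have key : ∀ t : ℝ, 0 ≤ (Vᴴ * M * V).trace * (t * t)
      + (2 * (Uᴴ * M * V).trace) * t + (Uᴴ * M * U).trace := by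
    intro t
    have h0 := hpos (U + t • V)
    have hexp : ((U + t • V)ᴴ * M * (U + t • V)).trace
        = (Vᴴ * M * V).trace * (t * t)
          + (2 * (Uᴴ * M * V).trace) * t + (Uᴴ * M * U).trace := by
      have hsym := trace_sym M hM U V
      simp only [Matrix.conjTranspose_add, Matrix.conjTranspose_smul, Matrix.add_mul,
        Matrix.mul_add, Matrix.smul_mul, Matrix.mul_smul, Matrix.trace_add, Matrix.trace_smul,
        star_trivial, smul_eq_mul]
      rw [hsym]; ring
    linarith [hexp ▸ h0]
  have hd := discrim_le_zero key
  rw [discrim] at hd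
  nlinarith [hd]

lemma trace_N_le (A : Matrix m k ℝ) (U : Matrix m k' ℝ) :
    (Uᴴ * (A * Aᴴ) * U).trace ≤ (A * Aᴴ).trace * (Uᴴ * U).trace := by
  rw [conj_fact, trace_ct_mul_self, trace_ct_mul_self]
  have htr : (A * Aᴴ).trace = ∑ i, ∑ j, A i j ^ 2 := by
    simp [Matrix.trace, Matrix.mul_apply, Matrix.conjTranspose_apply, Matrix.diag, sq]
  rw [htr]
  have hCS : ∀ (i : k) (j : k'),
      ((Aᴴ * U) i j) ^ 2 ≤ (∑ r, A r i ^ 2) * (∑ r, U r j ^ 2) := by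
    intro i j
    have h : (Aᴴ * U) i j = ∑ r, A r i * U r j := by
      simp [Matrix.mul_apply, Matrix.conjTranspose_apply]
    rw [h]
    exact Finset.sum_mul_sq_le_sq_mul_sq _ _ _
  calc ∑ j, ∑ i, ((Aᴴ * U) i j) ^ 2
      ≤ ∑ j, ∑ i, (∑ r, A r i ^ 2) * (∑ r, U r j ^ 2) := by
        refine Finset.sum_le_sum fun j _ => Finset.sum_le_sum fun i _ => hCS i j
    _ = (∑ i, ∑ r, A r i ^ 2) * (∑ j, ∑ r, U r j ^ 2) := by
        rw [Finset.sum_comm]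
        simp_rw [← Finset.mul_sum]
        rw [← Finset.sum_mul]
    _ = (∑ i, ∑ j, A i j ^ 2) * (∑ j, ∑ r, U r j ^ 2) := by
        rw [Finset.sum_comm (f := fun i r => A r i ^ 2)]

lemma trace_N_nonneg (A : Matrix m k ℝ) : 0 ≤ (A * Aᴴ).trace := by
  rw [Matrix.trace_mul_comm]
  exact trace_ct_mul_self_nonneg A

lemma trace_inv_bounds (A : Matrix m k ℝ) (B : Matrix m k' ℝ) {γ : ℝ} (hγ : 0 < γ) :
    (Bᴴ * B).trace / ((A * Aᴴ).trace + γ)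
      ≤ (Bᴴ * (A * Aᴴ + γ • (1 : Matrix m m ℝ))⁻¹ * B).trace ∧
    (Bᴴ * (A * Aᴴ + γ • (1 : Matrix m m ℝ))⁻¹ * B).trace ≤ (Bᴴ * B).trace / γ := by
  set N : Matrix m m ℝ := A * Aᴴ with hN
  set M : Matrix m m ℝ := N + γ • 1 with hMdef
  have hNH : Nᴴ = N := (Matrix.posSemidef_self_mul_conjTranspose A).isHermitian
  have hNT : Nᵀ = N := by simpa using hNH
  have hMH : Mᴴ = M := by
    rw [hMdef, Matrix.conjTranspose_add, hNH, Matrix.conjTranspose_smul]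
    simp
  have hPD : M.PosDef := by
    refine Matrix.PosDef.posSemidef_add (Matrix.posSemidef_self_mul_conjTranspose A) ?_
    rw [Matrix.smul_one_eq_diagonal]
    exact Matrix.posDef_diagonal_iff.mpr fun _ => hγ
  have hdet : IsUnit M.det := isUnit_iff_ne_zero.mpr hPD.det_pos.ne'
  have hMC : M * (M⁻¹ * B) = B := by
    rw [← Matrix.mul_assoc, Matrix.mul_nonsing_inv _ hdet, Matrix.one_mul]
  set C : Matrix m k' ℝ := M⁻¹ * B with hC
  have key : Bᴴ * M⁻¹ * B = Cᴴ * M * C := by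
    conv_lhs => rw [← hMC]
    rw [Matrix.conjTranspose_mul, hMH, Matrix.mul_assoc (Cᴴ * M),
      ← Matrix.mul_assoc M⁻¹, Matrix.nonsing_inv_mul _ hdet, Matrix.one_mul]
  have keyB : Bᴴ * B = Cᴴ * M * (M * C) := by
    conv_lhs => rw [← hMC]
    rw [Matrix.conjTranspose_mul, hMH, Matrix.mul_assoc]
  set t1 := (Cᴴ * (N * N) * C).trace with ht1def
  set t2 := (Cᴴ * N * C).trace with ht2def
  set t3 := (Cᴴ * C).trace with ht3def
  have ht1 : 0 ≤ t1 := by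
    have h : Cᴴ * (N * N) * C = (N * C)ᴴ * (N * C) := by
      simp [Matrix.conjTranspose_mul, hNH, hNT, Matrix.mul_assoc]
    rw [ht1def, h]
    exact trace_ct_mul_self_nonneg _
  have ht2 : 0 ≤ t2 := trace_conj_N_nonneg A C
  have ht3 : 0 ≤ t3 := trace_ct_mul_self_nonneg C
  have htCMC : (Cᴴ * M * C).trace = t2 + γ * t3 := by
    rw [hMdef, Matrix.mul_add, Matrix.add_mul, Matrix.mul_smul, Matrix.smul_mul,
      Matrix.mul_one, Matrix.trace_add, Matrix.trace_smul, smul_eq_mul]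
  have hMC_expand : M * C = N * C + γ • C := by
    rw [hMdef, Matrix.add_mul, Matrix.smul_mul, Matrix.one_mul]
  have hs : (Bᴴ * B).trace = t1 + 2 * γ * t2 + γ ^ 2 * t3 := by
    rw [keyB, hMC_expand, Matrix.mul_add, Matrix.trace_add]
    have h1 : (Cᴴ * M * (N * C)).trace = t1 + γ * t2 := by
      rw [hMdef, Matrix.mul_add, Matrix.add_mul, Matrix.mul_smul, Matrix.smul_mul,
        Matrix.mul_one, Matrix.trace_add, Matrix.trace_smul,
        show Cᴴ * N * (N * C) = Cᴴ * (N * N) * C by simp [Matrix.mul_assoc],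
        show Cᴴ * (N * C) = Cᴴ * N * C from (Matrix.mul_assoc _ _ _).symm,
        smul_eq_mul]
    have h2 : (Cᴴ * M * (γ • C)).trace = γ * (t2 + γ * t3) := by
      rw [Matrix.mul_smul, Matrix.trace_smul, htCMC]; simp
    rw [h1, h2]; ring
  have htrace_eq : (Bᴴ * M⁻¹ * B).trace = t2 + γ * t3 := by rw [key, htCMC]
  have hsnn : 0 ≤ (Bᴴ * B).trace := trace_ct_mul_self_nonneg B
  clear_value t1 t2 t3 C M N
  constructor
  · -- lower bound via Cauchy-Schwarz
    have hpos : ∀ U : Matrix m k' ℝ, 0 ≤ (Uᴴ * M * U).trace := by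
      intro U
      rw [hMdef, Matrix.mul_add, Matrix.add_mul, Matrix.mul_smul, Matrix.smul_mul,
        Matrix.mul_one, Matrix.trace_add, Matrix.trace_smul, smul_eq_mul]
      have h1 := trace_conj_N_nonneg A U
      rw [← hN] at h1
      have h2 := trace_ct_mul_self_nonneg U
      nlinarith
    have hcs := trace_cs M hMH hpos C B
    have hCMB : (Cᴴ * M * B).trace = (Bᴴ * B).trace := by
      conv_lhs => rw [show Cᴴ * M * B = Cᴴ * M * (M * C) by rw [hMC]]
      rw [keyB]
    have hBMB : (Bᴴ * M * B).trace ≤ (N.trace + γ) * (Bᴴ * B).trace := by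
      rw [hMdef, Matrix.mul_add, Matrix.add_mul, Matrix.mul_smul, Matrix.smul_mul,
        Matrix.mul_one, Matrix.trace_add, Matrix.trace_smul, smul_eq_mul]
      have h1 := trace_N_le A B
      rw [← hN] at h1
      nlinarith
    rw [hCMB] at hcs
    rw [key]
    set s := (Bᴴ * B).trace with hsdef
    set t := (Cᴴ * M * C).trace with htdef0
    set u := (Bᴴ * M * B).trace with hudef
    set c0 := N.trace with hc0def
    clear_value s t u c0
    have htnn : 0 ≤ t := by
      rw [htCMC]
      exact add_nonneg ht2 (mul_nonneg hγ.le ht3)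
    have hcγ : 0 < c0 + γ := by
      have h := trace_N_nonneg A
      rw [← hN] at h
      rw [hc0def]
      linarith only [h, hγ]
    rw [div_le_iff₀ hcγ]
    rcases eq_or_lt_of_le hsnn with h | h
    · rw [← h]
      exact mul_nonneg htnn hcγ.le
    · have h3 : t * u ≤ (t * (c0 + γ)) * s := by
        have h5 := mul_le_mul_of_nonneg_left hBMB htnn
        linarith only [h5]
      have h4 : s * s ≤ (t * (c0 + γ)) * s := by
        have h5 : s ^ 2 ≤ (t * (c0 + γ)) * s := le_trans hcs h3
        linarith only [h5]
      exact le_of_mul_le_mul_right h4 h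
  · -- upper bound
    rw [htrace_eq, le_div_iff₀ hγ, hs]
    have hp : 0 ≤ γ * t2 := mul_nonneg hγ.le ht2
    linarith only [hp, ht1]
end Aux

section MainAux

variable {d : ℕ} {n : Fin d → ℕ}

def splitEquiv (n : Fin d → ℕ) (J : Finset (Fin d)) :
    TIdx d n ≃ (∀ μ : {μ : Fin d // μ ∈ J}, Fin (n μ.1))
      × (∀ μ : {μ : Fin d // μ ∉ J}, Fin (n μ.1)) where
  toFun idx := (fun μ => idx μ.1, fun μ => idx μ.1)
  invFun p := fun μ => if h : μ ∈ J then p.1 ⟨μ, h⟩ else p.2 ⟨μ, h⟩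
  left_inv idx := by
    funext μ
    by_cases h : μ ∈ J <;> simp [h]
  right_inv p := by
    refine Prod.ext ?_ ?_ <;> · funext μ; simp [μ.2]

lemma trace_mat (X : Tensor d n) (J : Finset (Fin d)) :
    ((mat n X J)ᴴ * mat n X J).trace = ‖X‖ ^ 2 := by
  rw [Aux.trace_ct_mul_self]
  have hnorm : ‖X‖ ^ 2 = ∑ idx : TIdx d n, X idx ^ 2 := by
    rw [EuclideanSpace.norm_eq, Real.sq_sqrt (by positivity)]
    simp [sq_abs]
  rw [hnorm, ← Equiv.sum_comp (splitEquiv n J).symm (fun idx => X idx ^ 2),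
    Fintype.sum_prod_type, Finset.sum_comm]
  rfl

lemma Q_bounds (n : Fin d → ℕ) (K : Finset (Finset (Fin d))) {γ : ℝ} (hγ : 0 < γ)
    (X₀ X' : Tensor d n) :
    (K.card : ℝ) * ‖X'‖ ^ 2 / (‖X₀‖ ^ 2 + γ) ≤ Q n K γ X₀ X' ∧
      Q n K γ X₀ X' ≤ (K.card : ℝ) * ‖X'‖ ^ 2 / γ := by
  have hterm : ∀ J ∈ K,
      ‖X'‖ ^ 2 / (‖X₀‖ ^ 2 + γ) ≤ ((mat n X' J)ᴴ * wmat n γ X₀ J * mat n X' J).trace ∧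
      ((mat n X' J)ᴴ * wmat n γ X₀ J * mat n X' J).trace ≤ ‖X'‖ ^ 2 / γ := by
    intro J _
    have h := Aux.trace_inv_bounds (mat n X₀ J) (mat n X' J) hγ
    have hA : (mat n X₀ J * (mat n X₀ J)ᴴ).trace = ‖X₀‖ ^ 2 := by
      rw [Matrix.trace_mul_comm, trace_mat]
    have hB : ((mat n X' J)ᴴ * mat n X' J).trace = ‖X'‖ ^ 2 := trace_mat X' J
    rw [hA, hB] at h
    exact h
  constructor
  · calc (K.card : ℝ) * ‖X'‖ ^ 2 / (‖X₀‖ ^ 2 + γ)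
        = ∑ _J ∈ K, ‖X'‖ ^ 2 / (‖X₀‖ ^ 2 + γ) := by
          rw [Finset.sum_const, nsmul_eq_mul]; ring
    _ ≤ Q n K γ X₀ X' := Finset.sum_le_sum fun J hJ => (hterm J hJ).1
  · calc Q n K γ X₀ X' ≤ ∑ _J ∈ K, ‖X'‖ ^ 2 / γ :=
          Finset.sum_le_sum fun J hJ => (hterm J hJ).2
    _ = (K.card : ℝ) * ‖X'‖ ^ 2 / γ := by rw [Finset.sum_const, nsmul_eq_mul]; ring

end MainAux

/-- as `γ → ∞`, the weighted least squares minimizers `X^K_W`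
(with weights `W^{(J)} = ((X⁰)^{[J]}((X⁰)^{[J]})ᵀ + γ I)⁻¹` built from an
arbitrary feasible `X⁰`) converge to the unique minimal Frobenius norm solution
of `L X = y`; in particular the limit is independent of `X⁰`. -/
theorem tendsto_min_frobenius_norm {d ℓ : ℕ} (n : Fin d → ℕ)
    (K : Finset (Finset (Fin d)))
    (hKne : K.Nonempty) (hK : ∀ J ∈ K, J.Nonempty ∧ J ≠ Finset.univ)
    (L : Tensor d n →ₗ[ℝ] EuclideanSpace ℝ (Fin ℓ)) (hL : Function.Surjective L)
    (hld : ℓ < ∏ μ, n μ) (y : EuclideanSpace ℝ (Fin ℓ))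
    (X₀ : Tensor d n) (hX₀ : L X₀ = y)
    (XW : ℝ → Tensor d n)
    (hXW : ∀ γ : ℝ, 0 < γ →
      L (XW γ) = y ∧
      (∀ X' : Tensor d n, L X' = y → Q n K γ X₀ (XW γ) ≤ Q n K γ X₀ X') ∧
      (∀ X' : Tensor d n, L X' = y → Q n K γ X₀ X' = Q n K γ X₀ (XW γ) → X' = XW γ))
    (Xmin : Tensor d n)
    (hXmin : L Xmin = y ∧ ∀ X' : Tensor d n, L X' = y → X' ≠ Xmin → ‖Xmin‖ < ‖X'‖) :
    Filter.Tendsto XW Filter.atTop (nhds Xmin) := by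
  classical
  have hc0 : (0:ℝ) ≤ ‖X₀‖ ^ 2 := by positivity
  -- orthogonality of Xmin to the kernel of L
  have horth : ∀ Z : Tensor d n, L Z = 0 → (inner ℝ Xmin Z : ℝ) = 0 := by
    intro Z hZ
    by_contra hr
    have hZ0 : Z ≠ 0 := by
      rintro rfl
      simp at hr
    have hZn : (0:ℝ) < ‖Z‖ ^ 2 := pow_pos (norm_pos_iff.mpr hZ0) 2
    set r : ℝ := inner ℝ Xmin Z with hrdef
    set tt : ℝ := -r / ‖Z‖ ^ 2 with htt
    have htne : tt ≠ 0 := by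
      rw [htt]
      exact div_ne_zero (neg_ne_zero.mpr hr) hZn.ne'
    have hX' : L (Xmin + tt • Z) = y := by
      rw [map_add, LinearMap.map_smul, hZ, smul_zero, add_zero, hXmin.1]
    have hne : Xmin + tt • Z ≠ Xmin := by
      intro h
      have h2 : tt • Z = 0 := by
        have h3 := congrArg (fun W => W - Xmin) h
        simpa [add_sub_cancel_left] using h3
      rcases smul_eq_zero.mp h2 with h1 | h1
      · exact htne h1
      · exact hZ0 h1
    have hlt := hXmin.2 _ hX' hne
    have hsq : ‖Xmin + tt • Z‖ ^ 2 = ‖Xmin‖ ^ 2 + 2 * (tt * r) + tt ^ 2 * ‖Z‖ ^ 2 := by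
      rw [norm_add_sq_real, real_inner_smul_right, norm_smul]
      rw [mul_pow, Real.norm_eq_abs, sq_abs, hrdef]
    have heq : ‖Xmin + tt • Z‖ ^ 2 = ‖Xmin‖ ^ 2 - r ^ 2 / ‖Z‖ ^ 2 := by
      rw [hsq, htt]
      field_simp
      ring
    have hr2 : (0:ℝ) < r ^ 2 := lt_of_le_of_ne (sq_nonneg r) (Ne.symm (pow_ne_zero 2 hr))
    have hdivpos : (0:ℝ) < r ^ 2 / ‖Z‖ ^ 2 := div_pos hr2 hZn
    have hsq2 : ‖Xmin‖ ^ 2 < ‖Xmin + tt • Z‖ ^ 2 := by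
      have := pow_lt_pow_left₀ hlt (norm_nonneg Xmin) (two_ne_zero)
      exact this
    linarith
  -- quantitative bound
  have hbound : ∀ γ : ℝ, 0 < γ →
      ‖XW γ - Xmin‖ ^ 2 ≤ ‖X₀‖ ^ 2 * ‖Xmin‖ ^ 2 / γ := by
    intro γ hγ
    obtain ⟨hfeas, hmin, -⟩ := hXW γ hγ
    have hcγ : (0:ℝ) < ‖X₀‖ ^ 2 + γ := by linarith
    have h1 := (Q_bounds n K hγ X₀ (XW γ)).1
    have h2 : Q n K γ X₀ (XW γ) ≤ Q n K γ X₀ Xmin := hmin Xmin hXmin.1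
    have h3 := (Q_bounds n K hγ X₀ Xmin).2
    have hKpos : (0:ℝ) < K.card := by exact_mod_cast hKne.card_pos
    have combined : (K.card : ℝ) * ‖XW γ‖ ^ 2 / (‖X₀‖ ^ 2 + γ)
        ≤ (K.card : ℝ) * ‖Xmin‖ ^ 2 / γ := by linarith
    rw [div_le_div_iff₀ hcγ hγ] at combined
    have h5 : (K.card : ℝ) * (‖XW γ‖ ^ 2 * γ)
        ≤ (K.card : ℝ) * (‖Xmin‖ ^ 2 * (‖X₀‖ ^ 2 + γ)) := by linarith only [combined]
    have h6 := le_of_mul_le_mul_left h5 hKpos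
    -- orthogonal decomposition
    have hker : L (XW γ - Xmin) = 0 := by rw [map_sub, hfeas, hXmin.1, sub_self]
    have hip : (inner ℝ Xmin (XW γ - Xmin) : ℝ) = 0 := horth _ hker
    have hdecomp : ‖XW γ‖ ^ 2 = ‖Xmin‖ ^ 2 + ‖XW γ - Xmin‖ ^ 2 := by
      have hXe : XW γ = Xmin + (XW γ - Xmin) := by abel
      rw [hXe, norm_add_sq_real, hip]
      rw [← hXe]
      ring
    rw [le_div_iff₀ hγ]
    have h7 : ‖XW γ - Xmin‖ ^ 2 * γ = ‖XW γ‖ ^ 2 * γ - ‖Xmin‖ ^ 2 * γ := by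
      rw [hdecomp]; ring
    linarith only [h6, h7]
  -- limit
  rw [tendsto_iff_norm_sub_tendsto_zero]
  have hsqb : ∀ γ : ℝ, 1 ≤ γ →
      ‖XW γ - Xmin‖ ≤ Real.sqrt (‖X₀‖ ^ 2 * ‖Xmin‖ ^ 2 / γ) := by
    intro γ hγ1
    have h := hbound γ (lt_of_lt_of_le one_pos hγ1)
    have h2 := Real.sqrt_le_sqrt h
    rwa [Real.sqrt_sq (norm_nonneg _)] at h2
  apply squeeze_zero' (Filter.Eventually.of_forall fun γ => norm_nonneg _)
    ((Filter.eventually_ge_atTop 1).mono fun γ hγ1 => hsqb γ hγ1)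
  have hdiv : Filter.Tendsto (fun γ : ℝ => ‖X₀‖ ^ 2 * ‖Xmin‖ ^ 2 / γ)
      Filter.atTop (nhds 0) :=
    Filter.Tendsto.div_atTop tendsto_const_nhds Filter.tendsto_id
  exact (Real.continuous_sqrt.tendsto' 0 0 Real.sqrt_zero).comp hdiv


end
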